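/- Let A be an infinite matrix inducing a bounded operator L_A : ℓ_∞(F̂) → c_0, with associated matrix ā_{nk} = Σ_{j=k}^∞ (f_{j+1}^2/(f_k f_{k+1})) a_{nj}, and assume each ā_n ∈ ℓ_1. Then the Hausdorff measure of noncompactness of L_A equals limsup_n Σ_k |ā_{nk}|, and L_A is compact if and only if lim_n Σ_k |ā_{nk}| = 0. -/

import Mathlib

open scoped BigOperators ENNReal
open Filter Topology

noncomputable def fibr (n : ℕ) : ℝ := (Nat.fib (n + 1) : ℝ)

lemma fibr_pos (n : ℕ) : 0 < fibr n := by
  simpa [fibr] using Nat.cast_pos.mpr (Nat.fib_pos.mpr (Nat.succ_pos n))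

noncomputable def Fhat (x : ℕ → ℝ) : ℕ → ℝ
  | 0 => x 0
  | (n + 1) => fibr (n + 1) / fibr (n + 2) * x (n + 1) - fibr (n + 2) / fibr (n + 1) * x n

lemma Fhat_add (x y : ℕ → ℝ) : Fhat (x + y) = Fhat x + Fhat y := by
  funext n; cases n <;> simp [Fhat] <;> ring

lemma Fhat_smul (c : ℝ) (x : ℕ → ℝ) : Fhat (c • x) = c • Fhat x := by
  funext n; cases n <;> simp [Fhat] <;> ring

noncomputable def FhatL : (ℕ → ℝ) →ₗ[ℝ] (ℕ → ℝ) where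
  toFun := Fhat
  map_add' := Fhat_add
  map_smul' := Fhat_smul

lemma Fhat_inj : Function.Injective Fhat := by
  have h0 : ∀ x : ℕ → ℝ, Fhat x = 0 → x = 0 := by
    intro x hx
    funext n
    induction n with
    | zero => simpa [Fhat] using congrFun hx 0
    | succ n ih =>
        have h := congrFun hx (n + 1)
        simp only [Fhat, ih, Pi.zero_apply, mul_zero, sub_zero] at h
        have h1 : fibr (n + 1) / fibr (n + 2) ≠ 0 :=
          div_ne_zero (fibr_pos _).ne' (fibr_pos _).ne'
        simpa [Pi.zero_apply] using (mul_eq_zero.mp h).resolve_left h1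
  have : Function.Injective FhatL := (injective_iff_map_eq_zero' FhatL).mpr
    (fun x => ⟨fun h => h0 x h, fun h => by simp [FhatL, h]; funext n; cases n <;> simp [Fhat]⟩)
  exact this

noncomputable def FhatLP : PreLp (fun _ : ℕ => ℝ) →ₗ[ℝ] PreLp (fun _ : ℕ => ℝ) where
  toFun x := Fhat x
  map_add' x y := Fhat_add x y
  map_smul' c x := Fhat_smul c x

noncomputable def ellF (p : ℝ≥0∞) : Submodule ℝ (PreLp (fun _ : ℕ => ℝ)) :=
  (lpSubmodule ℝ (fun _ : ℕ => ℝ) p).comap FhatLP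

instance (p : ℝ≥0∞) : CoeOut (ellF p) (ℕ → ℝ) := ⟨fun x => (x : PreLp (fun _ : ℕ => ℝ))⟩

noncomputable def ellFtoLp (p : ℝ≥0∞) : ellF p →ₗ[ℝ] lp (fun _ : ℕ => ℝ) p where
  toFun x := ⟨Fhat (x : ℕ → ℝ), x.2⟩
  map_add' x y := Subtype.ext (Fhat_add (x : ℕ → ℝ) (y : ℕ → ℝ))
  map_smul' c x := Subtype.ext (Fhat_smul c (x : ℕ → ℝ))

lemma ellFtoLp_inj (p : ℝ≥0∞) : Function.Injective (ellFtoLp p) := by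
  intro x y h
  have h2 : Fhat (x : ℕ → ℝ) = Fhat (y : ℕ → ℝ) := congrArg Subtype.val h
  exact Subtype.ext (Fhat_inj h2)

noncomputable instance (p : ℝ≥0∞) [Fact (1 ≤ p)] : NormedAddCommGroup (ellF p) :=
  NormedAddCommGroup.induced _ _ (ellFtoLp p) (ellFtoLp_inj p)

noncomputable instance (p : ℝ≥0∞) [Fact (1 ≤ p)] : NormedSpace ℝ (ellF p) :=
  NormedSpace.induced _ _ _ (ellFtoLp p)

noncomputable def abar (a : ℕ → ℝ) (k : ℕ) : ℝ :=
  ∑' j : ℕ, (fibr (k + j + 1)) ^ 2 / (fibr k * fibr (k + 1)) * a (k + j)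

noncomputable def hmnc {X : Type*} [MetricSpace X] (Q : Set X) : ℝ :=
  sInf {ε : ℝ | 0 < ε ∧ ∃ s : Finset X, Q ⊆ ⋃ x ∈ s, Metric.ball x ε}



instance factTop : Fact ((1 : ℝ≥0∞) ≤ ∞) := ⟨le_top⟩

/-! Both sides of the formula vanish. Summation by parts turns `L` into the matrix `ā` acting on
`F̂x`, and `F̂` maps `ℓ_∞(F̂)` onto `ℓ_∞`; so `L` maps into `c₀` only if `ā` maps `ℓ_∞` into `c₀`,
which by Schur's gliding-hump argument forces `∑ₖ |ā_{nk}| → 0`. Then `|(L x)_n| ≤ ‖x‖ ∑ₖ |ā_{nk}|`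
shows that `L` maps bounded sets to bounded sets with uniformly small tails, and such sets are
totally bounded in `ℓ_∞`. -/

open Finset

lemma fibr_zero : fibr 0 = 1 := by norm_num [fibr]

lemma fibr_one : fibr 1 = 1 := by norm_num [fibr]

lemma fibr_add_two (n : ℕ) : fibr (n + 2) = fibr (n + 1) + fibr n := by
  simp only [fibr, Nat.fib_add_two]
  push_cast
  ring

lemma two_pow_le_fibr_mul_fibr_succ (k : ℕ) : (2 : ℝ) ^ k ≤ fibr k * fibr (k + 1) := by
  induction k with
  | zero => norm_num [fibr_zero, fibr_one]
  | succ k ih =>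
    have hmono : fibr k ≤ fibr (k + 1) := by
      simpa [fibr] using Nat.fib_mono (Nat.le_succ (k + 1))
    rw [fibr_add_two, pow_succ]
    nlinarith [fibr_pos k]

lemma fibr_mul_fibr_succ_pos (k : ℕ) : 0 < fibr k * fibr (k + 1) :=
  mul_pos (fibr_pos k) (fibr_pos (k + 1))

lemma summable_inv_fibr_mul_fibr_succ : Summable fun k : ℕ => (fibr k * fibr (k + 1))⁻¹ := by
  refine summable_geometric_two.of_nonneg_of_le
    (fun k => inv_nonneg.2 (fibr_mul_fibr_succ_pos k).le) fun k => ?_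
  rw [one_div, inv_pow]
  exact inv_anti₀ (by positivity) (two_pow_le_fibr_mul_fibr_succ k)

-- Dividing `(F̂x)_{k+1}` by `f_{k+1} f_{k+2}` telescopes `x_k / f_{k+1}²`.
noncomputable def FhatInv (y : ℕ → ℝ) (k : ℕ) : ℝ :=
  fibr (k + 1) ^ 2 * ∑ j ∈ range (k + 1), y j / (fibr j * fibr (j + 1))

lemma Fhat_FhatInv (y : ℕ → ℝ) : Fhat (FhatInv y) = y := by
  funext k
  cases k with
  | zero => simp [Fhat, FhatInv, fibr_zero, fibr_one]
  | succ k =>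
    have h1 := (fibr_pos (k + 1)).ne'
    have h2 := (fibr_pos (k + 2)).ne'
    simp only [Fhat, FhatInv, sum_range_succ (n := k + 1)]
    field_simp
    ring

lemma FhatInv_Fhat (x : ℕ → ℝ) : FhatInv (Fhat x) = x :=
  Fhat_inj (Fhat_FhatInv (Fhat x))

theorem Summable.tsum_eq_tsum_sum_antidiagonal {α A : Type*} [AddCommMonoid α] [TopologicalSpace α]
    [ContinuousAdd α] [T3Space α] [AddMonoid A] [HasAntidiagonal A] {f : A × A → α}
    (hf : Summable f) : ∑' p, f p = ∑' n, ∑ p ∈ antidiagonal n, f p := by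
  rw [← HasAntidiagonal.sigmaAntidiagonalEquivProd.tsum_eq]
  refine (Summable.tsum_sigma' (fun n => (hasSum_fintype _).summable)
      (HasAntidiagonal.sigmaAntidiagonalEquivProd.summable_iff.2 hf)).trans ?_
  congr 1
  ext n
  rw [← sum_finset_coe, tsum_fintype]
  rfl

lemma abs_tsum_le_tsum_abs {ι : Type*} {f : ι → ℝ} (hf : Summable fun i => |f i|) :
    |∑' i, f i| ≤ ∑' i, |f i| := by
  simpa only [Real.norm_eq_abs] using
    norm_tsum_le_tsum_norm (f := f) (by simpa only [Real.norm_eq_abs] using hf)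

section SummationByParts

variable {a : ℕ → ℝ}

lemma abs_abar_summand (k j : ℕ) :
    |fibr (k + j + 1) ^ 2 / (fibr k * fibr (k + 1)) * a (k + j)| =
      (fibr k * fibr (k + 1))⁻¹ * (fibr (k + j + 1) ^ 2 * |a (k + j)|) := by
  rw [abs_mul, abs_div, abs_of_nonneg (sq_nonneg _),
    abs_of_pos (fibr_mul_fibr_succ_pos k)]
  ring

lemma sum_antidiagonal_abar_summand_mul (y : ℕ → ℝ) (n : ℕ) :
    ∑ p ∈ antidiagonal n,
      fibr (p.1 + p.2 + 1) ^ 2 / (fibr p.1 * fibr (p.1 + 1)) * a (p.1 + p.2) * y p.1 =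
      a n * FhatInv y n := by
  rw [sum_congr rfl fun p hp => by rw [mem_antidiagonal.1 hp],
    Finset.Nat.sum_antidiagonal_eq_sum_range_succ
      (fun k _ => fibr (n + 1) ^ 2 / (fibr k * fibr (k + 1)) * a n * y k),
    FhatInv, mul_sum, mul_sum]
  refine sum_congr rfl fun k _ => ?_
  ring

variable (ha : Summable fun j => fibr (j + 1) ^ 2 * |a j|)
include ha

lemma summable_abs_abar_summand (k : ℕ) :
    Summable fun j => |fibr (k + j + 1) ^ 2 / (fibr k * fibr (k + 1)) * a (k + j)| := by
  simp_rw [abs_abar_summand, add_comm k]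
  exact ((summable_nat_add_iff k).2 ha).mul_left _

lemma tsum_abs_abar_summand_le (k : ℕ) :
    ∑' j, |fibr (k + j + 1) ^ 2 / (fibr k * fibr (k + 1)) * a (k + j)| ≤
      (fibr k * fibr (k + 1))⁻¹ * ∑' j, fibr (j + 1) ^ 2 * |a j| := by
  simp_rw [abs_abar_summand]
  rw [tsum_mul_left]
  exact mul_le_mul_of_nonneg_left
    (tsum_comp_le_tsum_of_inj ha (fun j => by positivity) (add_right_injective k))
    (inv_pos.2 (fibr_mul_fibr_succ_pos k)).le

lemma summable_abs_abar : Summable fun k => |abar a k| :=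
  Summable.of_nonneg_of_le (fun _ => abs_nonneg _)
    (fun k => (abs_tsum_le_tsum_abs (summable_abs_abar_summand ha k)).trans
      (tsum_abs_abar_summand_le ha k))
    (summable_inv_fibr_mul_fibr_succ.mul_right _)

theorem tsum_mul_eq_tsum_abar_mul_Fhat {x : ℕ → ℝ} {C : ℝ} (hx : ∀ k, |Fhat x k| ≤ C) :
    ∑' j, a j * x j = ∑' k, abar a k * Fhat x k := by
  set y := Fhat x
  set G : ℕ × ℕ → ℝ := fun p =>
    fibr (p.1 + p.2 + 1) ^ 2 / (fibr p.1 * fibr (p.1 + 1)) * a (p.1 + p.2) * y p.1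
  have hfiber : ∀ k, Summable fun j => |G (k, j)| := fun k =>
    ((summable_abs_abar_summand ha k).mul_right |y k|).congr fun j => (abs_mul _ _).symm
  have hG : Summable G := by
    refine Summable.of_abs ((summable_prod_of_nonneg fun _ => abs_nonneg _).2 ⟨hfiber, ?_⟩)
    refine Summable.of_nonneg_of_le (fun _ => tsum_nonneg fun _ => abs_nonneg _) (fun k => ?_)
      ((summable_inv_fibr_mul_fibr_succ.mul_right (∑' j, fibr (j + 1) ^ 2 * |a j|)).mul_right C)
    simp only [G, abs_mul _ (y k), tsum_mul_right]
    exact mul_le_mul (tsum_abs_abar_summand_le ha k) (hx k) (abs_nonneg _)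
      (mul_nonneg (inv_pos.2 (fibr_mul_fibr_succ_pos k)).le
        (tsum_nonneg fun j => by positivity))
  calc ∑' j, a j * x j = ∑' n, ∑ p ∈ antidiagonal n, G p := by
        simp only [G, sum_antidiagonal_abar_summand_mul, y, FhatInv_Fhat]
    _ = ∑' p, G p := hG.tsum_eq_tsum_sum_antidiagonal.symm
    _ = ∑' k, ∑' j, G (k, j) := hG.tsum_prod' fun k => (hfiber k).of_abs
    _ = ∑' k, abar a k * y k := by simp only [G, tsum_mul_right, abar]

end SummationByParts

section Schur

lemma exists_mem_Ico_of_strictMono {m : ℕ → ℕ} (hm : StrictMono m) (h0 : m 0 = 0) (k : ℕ) :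
    ∃ i, k ∈ Set.Ico (m i) (m (i + 1)) := by
  classical
  have hex : ∃ i, k < m (i + 1) := ⟨k, Nat.lt_succ_self k |>.trans_le (hm.id_le (k + 1))⟩
  refine ⟨Nat.find hex, ?_, Nat.find_spec hex⟩
  rcases h : Nat.find hex with _ | i
  · simp [h0]
  · exact not_lt.1 (Nat.find_min hex (h ▸ Nat.lt_succ_self i))

lemma eq_of_mem_Ico_of_strictMono {m : ℕ → ℕ} (hm : StrictMono m) {i j k : ℕ}
    (hi : k ∈ Set.Ico (m i) (m (i + 1))) (hj : k ∈ Set.Ico (m j) (m (j + 1))) : i = j := by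
  by_contra hne
  rcases Nat.lt_or_gt_of_ne hne with h | h
  · exact (hm.monotone h).trans hj.1 |>.not_gt hi.2
  · exact (hm.monotone h).trans hi.1 |>.not_gt hj.2

lemma tsum_abs_sub_le_tsum_mul {f y : ℕ → ℝ} (hf : Summable fun k => |f k|) (hy : ∀ k, |y k| ≤ 1)
    {m M : ℕ} (hmM : m ≤ M) (hsign : ∀ k, m ≤ k → k < M → f k * y k = |f k|) :
    ∑' k, |f k| - 2 * (∑ k ∈ range m, |f k| + ∑' k, |f (k + M)|) ≤ ∑' k, f k * y k := by
  have hfy : ∀ k, |f k * y k| ≤ |f k| := fun k => by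
    rw [abs_mul]; exact mul_le_of_le_one_right (abs_nonneg _) (hy k)
  have hsfy : Summable fun k => f k * y k :=
    (hf.of_nonneg_of_le (fun _ => abs_nonneg _) hfy).of_abs
  set g : ℕ → ℝ := fun k => |f k| - f k * y k
  have hg : Summable g := hf.sub hsfy
  have hg2 : ∀ k, g k ≤ 2 * |f k| := fun k => by
    have := neg_abs_le (f k * y k); linarith [hfy k]
  have hgIco : ∑ k ∈ Ico m M, g k = 0 :=
    sum_eq_zero fun k hk => sub_eq_zero.2 (hsign k (mem_Ico.1 hk).1 (mem_Ico.1 hk).2).symm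
  have hgle : ∑' k, g k ≤ 2 * (∑ k ∈ range m, |f k| + ∑' k, |f (k + M)|) := by
    rw [← hg.sum_add_tsum_nat_add M, ← sum_range_add_sum_Ico _ hmM, hgIco, add_zero, mul_add,
      mul_sum, ← tsum_mul_left]
    exact add_le_add (sum_le_sum fun k _ => hg2 k) (((summable_nat_add_iff M).2 hg).tsum_le_tsum
      (fun k => hg2 _) (((summable_nat_add_iff M).2 hf).mul_left 2))
  have hgsum : ∑' k, g k = ∑' k, |f k| - ∑' k, f k * y k := hf.tsum_sub hsfy
  linarith

variable {b : ℕ → ℕ → ℝ}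

lemma exists_row_with_small_head_and_tail (hcoord : ∀ k, Tendsto (fun n => b n k) atTop (𝓝 0))
    {ε δ : ℝ} (hfreq : ∃ᶠ n in atTop, ε ≤ ∑' k, |b n k|) (hδ : 0 < δ) (p : ℕ × ℕ) :
    ∃ q : ℕ × ℕ, p.1 < q.1 ∧ p.2 < q.2 ∧ ε ≤ ∑' k, |b q.1 k| ∧
      ∑ k ∈ range p.2, |b q.1 k| < δ ∧ ∑' k, |b q.1 (k + q.2)| < δ := by
  have hhead : Tendsto (fun n => ∑ k ∈ range p.2, |b n k|) atTop (𝓝 0) := by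
    simpa using tendsto_finsetSum (range p.2) fun k _ => (hcoord k).abs
  obtain ⟨n, hεn, hhead_n, hpn⟩ := (hfreq.and_eventually
    ((hhead.eventually (gt_mem_nhds hδ)).and (eventually_gt_atTop p.1))).exists
  obtain ⟨M, htail, hpM⟩ := (((tendsto_sum_nat_add fun k => |b n k|).eventually
    (gt_mem_nhds hδ)).and (eventually_gt_atTop p.2)).exists
  exact ⟨(n, M), hpn, hpM, hεn, hhead_n, htail⟩

lemma exists_gliding_hump (hcoord : ∀ k, Tendsto (fun n => b n k) atTop (𝓝 0)) {ε δ : ℝ}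
    (hfreq : ∃ᶠ n in atTop, ε ≤ ∑' k, |b n k|) (hδ : 0 < δ) :
    ∃ row cut : ℕ → ℕ, StrictMono row ∧ StrictMono cut ∧ cut 0 = 0 ∧
      ∀ i, ε ≤ ∑' k, |b (row i) k| ∧ ∑ k ∈ range (cut i), |b (row i) k| < δ ∧
        ∑' k, |b (row i) (k + cut (i + 1))| < δ := by
  choose F hF using exists_row_with_small_head_and_tail hcoord hfreq hδ
  set q : ℕ → ℕ × ℕ := fun i => F^[i] (0, 0)
  have hq : ∀ i, q (i + 1) = F (q i) := fun i => Function.iterate_succ_apply' F i (0, 0)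
  refine ⟨fun i => (q (i + 1)).1, fun i => (q i).2, strictMono_nat_of_lt_succ fun i => ?_,
    strictMono_nat_of_lt_succ fun i => ?_, rfl, fun i => ?_⟩
  · simpa only [hq (i + 1)] using (hF (q (i + 1))).1
  · simpa only [hq i] using (hF (q i)).2.1
  · simpa only [hq i] using (hF (q i)).2.2

theorem tendsto_tsum_abs_of_forall_tendsto_tsum_mul (hb : ∀ n, Summable fun k => |b n k|)
    (h : ∀ y : ℕ → ℝ, (∀ k, |y k| ≤ 1) → Tendsto (fun n => ∑' k, b n k * y k) atTop (𝓝 0)) :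
    Tendsto (fun n => ∑' k, |b n k|) atTop (𝓝 0) := by
  have hcoord : ∀ k, Tendsto (fun n => b n k) atTop (𝓝 0) := fun k => by
    simpa [Pi.single_apply] using
      h (Pi.single k 1) fun j => by by_cases hj : j = k <;> simp [hj]
  refine tendsto_order.2 ⟨fun c hc => Eventually.of_forall fun n =>
    hc.trans_le (tsum_nonneg fun _ => abs_nonneg _), fun ε hε => ?_⟩
  by_contra hne
  have hfreq : ∃ᶠ n in atTop, ε ≤ ∑' k, |b n k| :=
    (not_eventually.1 hne).mono fun _ => not_lt.1
  obtain ⟨row, cut, hrow, hcut, hcut₀, hbump⟩ :=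
    exists_gliding_hump hcoord hfreq (δ := ε / 8) (by positivity)
  choose blk hblk using exists_mem_Ico_of_strictMono hcut hcut₀
  -- `y` takes the signs of row `i` on the window `[cut i, cut (i + 1))`, where that row carries
  -- all but `ε / 4` of its mass; so `y` pairs with every row `row i` to at least `ε / 2`.
  set y : ℕ → ℝ := fun k => SignType.sign (b (row (blk k)) k)
  have hy : ∀ k, |y k| ≤ 1 := fun k => by
    simp only [y]
    rcases SignType.sign (b (row (blk k)) k) with _ | _ | _ <;> simp
  have hlow : ∀ i, ε / 2 ≤ ∑' k, b (row i) k * y k := fun i => by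
    obtain ⟨hε_i, hhead, htail⟩ := hbump i
    have := tsum_abs_sub_le_tsum_mul (hb (row i)) hy (hcut (Nat.lt_succ_self i)).le
      fun k hk₁ hk₂ => by
        simp only [y]
        rw [show blk k = i from eq_of_mem_Ico_of_strictMono hcut (hblk k) ⟨hk₁, hk₂⟩]
        exact self_mul_sign _
    linarith
  obtain ⟨i, hi⟩ := (((h y hy).comp hrow.tendsto_atTop).eventually
    (gt_mem_nhds (half_pos hε))).exists
  exact (hlow i).not_gt hi

end Schur

lemma abs_Fhat_le_norm (x : ellF ∞) (k : ℕ) : |Fhat (x : ℕ → ℝ) k| ≤ ‖x‖ :=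
  lp.norm_apply_le_norm ENNReal.top_ne_zero (ellFtoLp ∞ x) k

lemma exists_Fhat_eq {y : ℕ → ℝ} (hy : Memℓp y ∞) : ∃ x : ellF ∞, Fhat (x : ℕ → ℝ) = y :=
  ⟨⟨FhatInv y, show Memℓp (Fhat (FhatInv y)) ∞ from (Fhat_FhatInv y).symm ▸ hy⟩, Fhat_FhatInv y⟩

theorem lp.totallyBounded_of_tail_le {E : Type*} [NormedAddCommGroup E] [ProperSpace E]
    {s : Set (lp (fun _ : ℕ => E) ∞)} (hs : Bornology.IsBounded s)
    (htail : ∀ ε > 0, ∃ r, ∀ u ∈ s, ∀ n, r ≤ n → ‖u n‖ ≤ ε) : TotallyBounded s := by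
  rw [Metric.totallyBounded_iff]
  intro ε hε
  obtain ⟨r, hr⟩ := htail (ε / 3) (by positivity)
  set π : lp (fun _ : ℕ => E) ∞ → (Fin r → E) := fun u i => u i
  have hπ : LipschitzWith 1 π := LipschitzWith.of_dist_le_mul fun u v => by
    rw [NNReal.coe_one, one_mul, dist_pi_le_iff dist_nonneg]
    intro i
    rw [dist_eq_norm, dist_eq_norm]
    exact lp.norm_apply_le_norm ENNReal.top_ne_zero (u - v) i
  have hπs : TotallyBounded (π '' s) :=
    (hπ.isBounded_image hs).isCompact_closure.totallyBounded.subset subset_closure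
  obtain ⟨t, hts, htfin, hcover⟩ := Set.exists_subset_image_finite_and.1
    (Metric.finite_approx_of_totallyBounded hπs (ε / 3) (by positivity))
  refine ⟨t, htfin, fun v hv => ?_⟩
  obtain ⟨_, ⟨u, hu, rfl⟩, hvu⟩ := Set.mem_iUnion₂.1 (hcover ⟨v, hv, rfl⟩)
  refine Set.mem_iUnion₂.2 ⟨u, hu, ?_⟩
  rw [Metric.mem_ball, dist_eq_norm]
  refine (lp.norm_le_of_forall_le (by positivity : 0 ≤ 2 * ε / 3) fun n => ?_).trans_lt
    (by linarith)
  rcases lt_or_ge n r with hn | hn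
  · calc ‖(v - u : lp (fun _ : ℕ => E) ∞) n‖ = dist (π v ⟨n, hn⟩) (π u ⟨n, hn⟩) := by
          rw [dist_eq_norm]; rfl
      _ ≤ dist (π v) (π u) := dist_le_pi_dist _ _ _
      _ ≤ 2 * ε / 3 := by linarith [Metric.mem_ball.1 hvu]
  · calc ‖(v - u : lp (fun _ : ℕ => E) ∞) n‖ ≤ ‖v n‖ + ‖u n‖ := norm_sub_le _ _
      _ ≤ ε / 3 + ε / 3 := add_le_add (hr v hv n hn) (hr u (hts hu) n hn)
      _ = 2 * ε / 3 := by ring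

lemma hmnc_eq_zero_of_totallyBounded {X : Type*} [MetricSpace X] {Q : Set X}
    (hQ : TotallyBounded Q) : hmnc Q = 0 := by
  have hcover : {ε : ℝ | 0 < ε ∧ ∃ s : Finset X, Q ⊆ ⋃ x ∈ s, Metric.ball x ε} = Set.Ioi 0 := by
    ext ε
    refine ⟨And.left, fun hε => ⟨hε, ?_⟩⟩
    obtain ⟨t, htfin, hQt⟩ := Metric.totallyBounded_iff.1 hQ ε hε
    exact ⟨htfin.toFinset, by simpa using hQt⟩
  rw [hmnc, hcover, csInf_Ioi]

section MatrixOperator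

variable {A : ℕ → ℕ → ℝ} (ha : ∀ n, Summable fun j => fibr (j + 1) ^ 2 * |A n j|)
  {L : ellF ∞ →L[ℝ] lp (fun _ : ℕ => ℝ) ∞}
  (hrep : ∀ x : ellF ∞, ∀ n : ℕ, (L x : ℕ → ℝ) n = ∑' k : ℕ, A n k * (x : ℕ → ℝ) k)
include ha hrep

lemma apply_eq_tsum_abar_mul_Fhat (x : ellF ∞) (n : ℕ) :
    (L x : ℕ → ℝ) n = ∑' k, abar (A n) k * Fhat (x : ℕ → ℝ) k :=
  (hrep x n).trans (tsum_mul_eq_tsum_abar_mul_Fhat (ha n) (abs_Fhat_le_norm x))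

lemma abs_apply_le_tsum_abs_abar_mul_norm (x : ellF ∞) (n : ℕ) :
    |(L x : ℕ → ℝ) n| ≤ (∑' k, |abar (A n) k|) * ‖x‖ := by
  have hle : ∀ k, |abar (A n) k * Fhat (x : ℕ → ℝ) k| ≤ |abar (A n) k| * ‖x‖ := fun k => by
    rw [abs_mul]; exact mul_le_mul_of_nonneg_left (abs_Fhat_le_norm x k) (abs_nonneg _)
  have hsum := (summable_abs_abar (ha n)).mul_right ‖x‖
  rw [apply_eq_tsum_abar_mul_Fhat ha hrep, ← tsum_mul_right]
  exact (abs_tsum_le_tsum_abs (hsum.of_nonneg_of_le (fun _ => abs_nonneg _) hle)).trans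
    (Summable.tsum_le_tsum hle (hsum.of_nonneg_of_le (fun _ => abs_nonneg _) hle) hsum)

lemma tendsto_tsum_abs_abar
    (hc0 : ∀ x : ellF ∞, Tendsto (fun n : ℕ => (L x : ℕ → ℝ) n) atTop (𝓝 0)) :
    Tendsto (fun n => ∑' k, |abar (A n) k|) atTop (𝓝 0) :=
  tendsto_tsum_abs_of_forall_tendsto_tsum_mul (fun n => summable_abs_abar (ha n)) fun y hy => by
    obtain ⟨x, hx⟩ := exists_Fhat_eq (y := y) (memℓp_infty ⟨1, by rintro _ ⟨k, rfl⟩; exact hy k⟩)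
    simpa only [apply_eq_tsum_abar_mul_Fhat ha hrep, hx] using hc0 x

lemma totallyBounded_image_of_tendsto_tsum_abs_abar
    (hrows : Tendsto (fun n => ∑' k, |abar (A n) k|) atTop (𝓝 0))
    {s : Set (ellF ∞)} (hs : Bornology.IsBounded s) : TotallyBounded (L '' s) := by
  obtain ⟨C, hC⟩ := hs.exists_norm_le
  refine lp.totallyBounded_of_tail_le (L.lipschitz.isBounded_image hs) fun ε hε => ?_
  obtain ⟨r, hr⟩ := eventually_atTop.1
    (hrows.eventually (gt_mem_nhds (show 0 < ε / (|C| + 1) by positivity)))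
  refine ⟨r, ?_⟩
  rintro _ ⟨x, hx, rfl⟩ n hn
  calc ‖(L x : ℕ → ℝ) n‖ ≤ (∑' k, |abar (A n) k|) * ‖x‖ :=
        abs_apply_le_tsum_abs_abar_mul_norm ha hrep x n
    _ ≤ ε / (|C| + 1) * (|C| + 1) :=
        mul_le_mul (hr n hn).le (by linarith [hC x hx, le_abs_self C]) (norm_nonneg _)
          (by positivity)
    _ = ε := div_mul_cancel₀ _ (by positivity)

end MatrixOperator

theorem stmt12_general (A : ℕ → ℕ → ℝ)
    (ha : ∀ n k : ℕ, Summable fun j : ℕ => |fibr (k + j + 1) ^ 2 / (fibr k * fibr (k + 1)) * A n (k + j)|)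
    (L : ellF ∞ →L[ℝ] lp (fun _ : ℕ => ℝ) ∞)
    (hrep : ∀ x : ellF ∞, ∀ n : ℕ, (L x : ℕ → ℝ) n = ∑' k : ℕ, A n k * (x : ℕ → ℝ) k)
    (hc0 : ∀ x : ellF ∞, Tendsto (fun n : ℕ => (L x : ℕ → ℝ) n) atTop (𝓝 0)) :
    hmnc (⇑L '' Metric.sphere 0 1) = Filter.limsup (fun n : ℕ => ∑' k : ℕ, |abar (A n) k|) atTop ∧
    ((∀ s : Set (ellF ∞), Bornology.IsBounded s → TotallyBounded (⇑L '' s)) ↔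
      Tendsto (fun n : ℕ => ∑' k : ℕ, |abar (A n) k|) atTop (𝓝 0)) := by
  have ha₀ : ∀ n, Summable fun j => fibr (j + 1) ^ 2 * |A n j| := fun n => by
    simpa [fibr_zero, fibr_one, abs_mul] using ha n 0
  have hrows := tendsto_tsum_abs_abar ha₀ hrep hc0
  have hcompact : ∀ s : Set (ellF ∞), Bornology.IsBounded s → TotallyBounded (⇑L '' s) :=
    fun _ => totallyBounded_image_of_tendsto_tsum_abs_abar ha₀ hrep hrows
  refine ⟨?_, iff_of_true hcompact hrows⟩
  rw [hrows.limsup_eq, hmnc_eq_zero_of_totallyBounded (hcompact _ Metric.isBounded_sphere)]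

theorem stmt12 (A : ℕ → ℕ → ℝ)
    (ha : ∀ n k : ℕ, Summable fun j : ℕ => |fibr (k + j + 1) ^ 2 / (fibr k * fibr (k + 1)) * A n (k + j)|)
    (hrow : ∀ n : ℕ, Summable fun k : ℕ => |abar (A n) k|)
    (L : ellF ∞ →L[ℝ] lp (fun _ : ℕ => ℝ) ∞)
    (hrep : ∀ x : ellF ∞, ∀ n : ℕ, (L x : ℕ → ℝ) n = ∑' k : ℕ, A n k * (x : ℕ → ℝ) k)
    (hc0 : ∀ x : ellF ∞, Tendsto (fun n : ℕ => (L x : ℕ → ℝ) n) atTop (𝓝 0)) :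
    hmnc (⇑L '' Metric.sphere 0 1) = Filter.limsup (fun n : ℕ => ∑' k : ℕ, |abar (A n) k|) atTop ∧
    ((∀ s : Set (ellF ∞), Bornology.IsBounded s → TotallyBounded (⇑L '' s)) ↔
      Tendsto (fun n : ℕ => ∑' k : ℕ, |abar (A n) k|) atTop (𝓝 0)) :=
  stmt12_general A ha L hrep hc0
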